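/- Let X ⊆ ℕ and let (k_n)_{n ≥ 1} be a sequence of pairwise coprime positive integers. If the series ∑_{n ≥ 1} (1 − r_{k_n}(X)/k_n) diverges to infinity (in particular, if ∑_{n ≥ 1} 1/k_n = ∞ and r_{k_n}(X) ≤ k_n − 1 for every n ≥ 1), then X is small. -/

import Mathlib

open Set Filter Topology

/-- An upper quasi-density on ℕ. -/
def IsUpperQuasiDensity (μ : Set ℕ → ℝ) : Prop :=
  μ Set.univ = 1 ∧
  (∀ X : Set ℕ, μ X ≤ 1) ∧
  (∀ X Y : Set ℕ, μ (X ∪ Y) ≤ μ X + μ Y) ∧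
  (∀ (X : Set ℕ) (k : ℕ), 0 < k → μ ((fun x => k * x) '' X) = μ X / k) ∧
  (∀ (X : Set ℕ) (h : ℕ), μ ((fun x => x + h) '' X) = μ X)

/-- An upper density on ℕ: a monotone upper quasi-density. -/
def IsUpperDensity (μ : Set ℕ → ℝ) : Prop :=
  IsUpperQuasiDensity μ ∧ ∀ X Y : Set ℕ, X ⊆ Y → μ X ≤ μ Y

/-- A set of naturals is small if every upper quasi-density vanishes on it. -/
def SmallSet (X : Set ℕ) : Prop :=
  ∀ μ : Set ℕ → ℝ, IsUpperQuasiDensity μ → μ X = 0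

/-- The upper asymptotic density of a set of naturals. -/
noncomputable def upperAsymptoticDensity (X : Set ℕ) : ℝ :=
  limsup (fun n : ℕ => ((X ∩ Set.Icc 1 n).ncard : ℝ) / n) atTop

/-- The arithmetic progression k·ℕ + h. -/
def AP (k h : ℕ) : Set ℕ := {x : ℕ | ∃ m : ℕ, x = k * m + h}

/-- A finite union of arithmetic progressions of ℕ. -/
def IsFinUnionAP (A : Set ℕ) : Prop :=
  ∃ s : Finset (ℕ × ℕ), (∀ p ∈ s, 0 < p.1) ∧ A = ⋃ p ∈ s, AP p.1 p.2

/-- The upper Buck density of a set of naturals. -/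
noncomputable def buckDensity (X : Set ℕ) : ℝ :=
  sInf {d : ℝ | ∃ A : Set ℕ, IsFinUnionAP A ∧ X ⊆ A ∧ d = upperAsymptoticDensity A}

/-- `rk k X` is the number of residues h ∈ [0, k-1] with X ∩ (k·ℕ + h) ≠ ∅. -/
noncomputable def rk (k : ℕ) (X : Set ℕ) : ℕ :=
  {h : ℕ | h < k ∧ (X ∩ AP k h).Nonempty}.ncard

/-- `wk μ k S` is the number of residues h ∈ [0, k-1] with μ(S ∩ (k·ℕ + h)) ≠ 0. -/
noncomputable def wk (μ : Set ℕ → ℝ) (k : ℕ) (S : Set ℕ) : ℕ :=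
  {h : ℕ | h < k ∧ μ (S ∩ AP k h) ≠ 0}.ncard

/-! Splitting ℕ into the residue classes modulo `K` and using the scaling and translation
invariance of `μ*` gives `μ*(X) ≤ r_K(X) / K`. For pairwise coprime moduli the Chinese
remainder theorem makes `r` submultiplicative, so taking `K = k₀ ⋯ k_{N-1}` yields
`μ*(X) ≤ ∏ r_{kᵢ}(X) / kᵢ ≤ exp (-∑ (1 - r_{kᵢ}(X) / kᵢ))`, which tends to `0`. -/

open Function

namespace IsUpperQuasiDensity

variable {μ : Set ℕ → ℝ} (hμ : IsUpperQuasiDensity μ)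
include hμ

lemma map_empty : μ ∅ = 0 := by
  have h := hμ.2.2.2.1 ∅ 2 two_pos
  simp only [Set.image_empty] at h
  linarith

lemma nonneg (X : Set ℕ) : 0 ≤ μ X := by
  have h := hμ.2.2.1 X Xᶜ
  rw [Set.union_compl_self, hμ.1] at h
  linarith [hμ.2.1 Xᶜ]

lemma le_one_div_of_subset_AP {K h : ℕ} (hK : 0 < K) {Y : Set ℕ} (hY : Y ⊆ AP K h) :
    μ Y ≤ 1 / K := by
  have hY_eq : Y = (fun x => x + h) '' ((fun x => K * x) '' {m | K * m + h ∈ Y}) := by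
    ext y
    simp only [Set.mem_image, Set.mem_ofPred_eq]
    constructor
    · intro hy
      obtain ⟨m, rfl⟩ := hY hy
      exact ⟨K * m, ⟨m, hy, rfl⟩, rfl⟩
    · rintro ⟨_, ⟨m, hm, rfl⟩, rfl⟩
      exact hm
  rw [hY_eq, hμ.2.2.2.2, hμ.2.2.2.1 _ K hK]
  gcongr
  exact hμ.2.1 _

lemma biUnion_le_sum {ι : Type*} (s : Finset ι) (f : ι → Set ℕ) :
    μ (⋃ i ∈ s, f i) ≤ ∑ i ∈ s, μ (f i) := by
  classical
  induction s using Finset.induction_on with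
  | empty => simp [hμ.map_empty]
  | insert a s ha ih =>
    rw [Finset.set_biUnion_insert, Finset.sum_insert ha]
    linarith [hμ.2.2.1 (f a) (⋃ i ∈ s, f i)]

end IsUpperQuasiDensity

open scoped Classical in
lemma rk_eq_card_filter (K : ℕ) (X : Set ℕ) :
    rk K X = ((Finset.range K).filter fun h => (X ∩ AP K h).Nonempty).card := by
  rw [rk, ← Set.ncard_coe_finset]
  congr 1
  ext h
  simp

lemma mem_AP_mod (K : ℕ) (x : ℕ) : x ∈ AP K (x % K) :=
  ⟨x / K, (Nat.div_add_mod x K).symm⟩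

lemma AP_mul_subset (a b h : ℕ) : AP (a * b) h ⊆ AP a (h % a) := by
  rintro x ⟨m, rfl⟩
  exact ⟨b * m + h / a, by rw [Nat.mul_add, ← Nat.mul_assoc, Nat.add_assoc, Nat.div_add_mod]⟩

lemma IsUpperQuasiDensity.le_rk_div {μ : Set ℕ → ℝ} (hμ : IsUpperQuasiDensity μ) {K : ℕ}
    (hK : 0 < K) (X : Set ℕ) : μ X ≤ rk K X / K := by
  classical
  set hit := (Finset.range K).filter fun h => (X ∩ AP K h).Nonempty
  have hcover : X = ⋃ h ∈ hit, X ∩ AP K h := by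
    ext x
    simp only [hit, Set.mem_iUnion, Finset.mem_filter, Finset.mem_range, Set.mem_inter_iff]
    have hmod := mem_AP_mod K x
    exact ⟨fun hx => ⟨x % K, ⟨Nat.mod_lt x hK, x, hx, hmod⟩, hx, hmod⟩,
      fun ⟨_, _, hx, _⟩ => hx⟩
  calc μ X ≤ ∑ h ∈ hit, μ (X ∩ AP K h) := by
        conv_lhs => rw [hcover]
        exact hμ.biUnion_le_sum hit _
    _ ≤ ∑ _h ∈ hit, (1 / K : ℝ) :=
      Finset.sum_le_sum fun _ _ => hμ.le_one_div_of_subset_AP hK Set.inter_subset_right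
    _ = rk K X / K := by rw [rk_eq_card_filter, Finset.sum_const, nsmul_eq_mul]; ring

lemma rk_mul_le {a b : ℕ} (ha : 0 < a) (hb : 0 < b) (hab : Nat.Coprime a b) (X : Set ℕ) :
    rk (a * b) X ≤ rk a X * rk b X := by
  classical
  simp only [rk_eq_card_filter, ← Finset.card_product]
  refine Finset.card_le_card_of_injOn (fun h => (h % a, h % b)) ?_ ?_
  · intro h hh
    simp only [Finset.coe_filter, Finset.mem_range, Set.mem_ofPred_eq] at hh
    obtain ⟨-, x, hxX, hxAP⟩ := hh
    simp only [Finset.mem_coe, Finset.mem_product, Finset.mem_filter, Finset.mem_range]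
    exact ⟨⟨Nat.mod_lt _ ha, x, hxX, AP_mul_subset a b h hxAP⟩,
      ⟨Nat.mod_lt _ hb, x, hxX, AP_mul_subset b a h (Nat.mul_comm a b ▸ hxAP)⟩⟩
  · intro h₁ hh₁ h₂ hh₂ heq
    simp only [Finset.coe_filter, Finset.mem_range, Set.mem_ofPred_eq] at hh₁ hh₂
    have hmod : h₁ ≡ h₂ [MOD a * b] :=
      (Nat.modEq_and_modEq_iff_modEq_mul hab).mp ⟨congrArg Prod.fst heq, congrArg Prod.snd heq⟩
    rwa [Nat.ModEq, Nat.mod_eq_of_lt hh₁.1, Nat.mod_eq_of_lt hh₂.1] at hmod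

lemma rk_one_le (X : Set ℕ) : rk 1 X ≤ 1 := by
  classical
  rw [rk_eq_card_filter]
  exact (Finset.card_filter_le _ _).trans (by simp)

lemma rk_prod_le {ι : Type*} (s : Finset ι) {k : ι → ℕ} (hpos : ∀ i ∈ s, 0 < k i)
    (hcop : (s : Set ι).Pairwise (Nat.Coprime on k)) (X : Set ℕ) :
    rk (∏ i ∈ s, k i) X ≤ ∏ i ∈ s, rk (k i) X := by
  classical
  induction s using Finset.induction_on with
  | empty => simpa using rk_one_le X
  | insert a s ha ih =>
    rw [Finset.coe_insert, Set.pairwise_insert] at hcop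
    rw [Finset.forall_mem_insert] at hpos
    rw [Finset.prod_insert ha, Finset.prod_insert ha]
    have hcop_a : Nat.Coprime (k a) (∏ i ∈ s, k i) :=
      Nat.Coprime.prod_right fun i hi => (hcop.2 i hi (ne_of_mem_of_not_mem hi ha).symm).1
    calc rk (k a * ∏ i ∈ s, k i) X ≤ rk (k a) X * rk (∏ i ∈ s, k i) X :=
          rk_mul_le hpos.1 (Finset.prod_pos hpos.2) hcop_a X
      _ ≤ rk (k a) X * ∏ i ∈ s, rk (k i) X := Nat.mul_le_mul_left _ (ih hpos.2 hcop.1)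

lemma Real.prod_le_exp_neg_sum_one_sub {ι : Type*} (s : Finset ι) {x : ι → ℝ}
    (hx : ∀ i ∈ s, 0 ≤ x i) : ∏ i ∈ s, x i ≤ Real.exp (-∑ i ∈ s, (1 - x i)) := by
  rw [← Finset.sum_neg_distrib, Real.exp_sum]
  exact Finset.prod_le_prod hx fun i _ => by simpa using Real.one_sub_le_exp_neg (1 - x i)

lemma IsUpperQuasiDensity.le_exp_neg_sum {μ : Set ℕ → ℝ} (hμ : IsUpperQuasiDensity μ)
    {ι : Type*} (s : Finset ι) {k : ι → ℕ} (hpos : ∀ i ∈ s, 0 < k i)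
    (hcop : (s : Set ι).Pairwise (Nat.Coprime on k)) (X : Set ℕ) :
    μ X ≤ Real.exp (-∑ i ∈ s, (1 - (rk (k i) X : ℝ) / k i)) := by
  calc μ X ≤ rk (∏ i ∈ s, k i) X / (∏ i ∈ s, k i : ℕ) :=
        hμ.le_rk_div (Finset.prod_pos hpos) X
    _ ≤ (∏ i ∈ s, rk (k i) X : ℕ) / (∏ i ∈ s, k i : ℕ) := by
      gcongr
      exact rk_prod_le s hpos hcop X
    _ = ∏ i ∈ s, ((rk (k i) X : ℝ) / k i) := by push_cast; rw [Finset.prod_div_distrib]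
    _ ≤ _ := Real.prod_le_exp_neg_sum_one_sub s fun i _ => by positivity

lemma one_div_le_one_sub_rk_div {K : ℕ} {X : Set ℕ} (hK : 0 < K) (hr : rk K X ≤ K - 1) :
    1 / (K : ℝ) ≤ 1 - rk K X / K := by
  have hr' : (rk K X : ℝ) + 1 ≤ K := by exact_mod_cast (Nat.le_sub_one_iff_lt hK).mp hr
  rw [le_sub_iff_add_le, ← add_div, div_le_one (by exact_mod_cast hK)]
  linarith

lemma smallSet_of_tendsto_sum_one_sub_rk_div {X : Set ℕ} {k : ℕ → ℕ} (hpos : ∀ n, 0 < k n)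
    (hcop : Pairwise (Nat.Coprime on k))
    (hdiv : Tendsto (fun n => ∑ i ∈ Finset.range n, (1 - (rk (k i) X : ℝ) / k i))
      atTop atTop) :
    SmallSet X := by
  intro μ hμ
  have hexp := Real.tendsto_exp_atBot.comp (tendsto_neg_atBot_iff.mpr hdiv)
  refine le_antisymm (ge_of_tendsto' hexp fun N => ?_) (hμ.nonneg X)
  exact hμ.le_exp_neg_sum _ (fun i _ => hpos i) (fun i _ j _ hij => hcop hij) X

/-- If the series ∑ (1 - r_{k_n}(X)/k_n) diverges (in particular, if ∑ 1/k_n = ∞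
and r_{k_n}(X) ≤ k_n - 1 for every n), then X is small. -/
theorem modular_criterion_small (X : Set ℕ) (k : ℕ → ℕ) (hpos : ∀ n, 0 < k n)
    (hcop : ∀ m n, m ≠ n → Nat.Coprime (k m) (k n)) :
    (Tendsto (fun n : ℕ =>
        ∑ i ∈ Finset.range n, (1 - (rk (k i) X : ℝ) / (k i : ℝ))) atTop atTop →
      SmallSet X) ∧
    ((Tendsto (fun n : ℕ => ∑ i ∈ Finset.range n, (1 : ℝ) / (k i : ℝ)) atTop atTop ∧
        ∀ n : ℕ, rk (k n) X ≤ k n - 1) →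
      SmallSet X) := by
  refine ⟨smallSet_of_tendsto_sum_one_sub_rk_div hpos hcop, fun ⟨hdiv, hrk⟩ => ?_⟩
  refine smallSet_of_tendsto_sum_one_sub_rk_div hpos hcop <|
    tendsto_atTop_mono (fun n => ?_) hdiv
  exact Finset.sum_le_sum fun i _ => one_div_le_one_sub_rk_div (hpos i) (hrk i)
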